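/- arXiv:2002.11205 — 2 statements merged into one kernel-verified Lean document; each statement's English description precedes it below -/
import Mathlib

section
/- Let G be a connected locally finite graph whose isoperimetric profile satisfies Φ(k) ≥ c·k^{(d-1)/d} for all k ≥ 1, for some constant c > 0 and some real d ≥ 2. Then for every function f : ℕ → ℕ with f(n) = o(n^{d-2}), G does not satisfy the {f(n)}-containment property. -/
open Filter Real

/-- The outer vertex boundary of a set of vertices: vertices outside `K`
adjacent to some vertex of `K`. -/
def SimpleGraph.outerBoundary {V : Type*} (G : SimpleGraph V) (K : Set V) : Set V :=
  {v | v ∉ K ∧ ∃ u ∈ K, G.Adj u v}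

/-- The (vertex) isoperimetric profile of a graph:
`Φ(k) = inf {|∂K| : K ⊆ V, |K| = k}`. -/
noncomputable def SimpleGraph.isoProfile {V : Type*} (G : SimpleGraph V) (k : ℕ) : ℕ :=
  sInf {m | ∃ K : Set V, K.Finite ∧ K.ncard = k ∧ (G.outerBoundary K).ncard = m}

/-- A valid play of the firefighter game on `G` against at most `f n` firefighters
deployed at step `n`. `K n` is the set of burning vertices at time `n`, and `P n`
is the cumulative set of protected vertices at time `n`: at each step at most
`f (n+1)` new vertices, none of them on fire, become protected, and then the fire
spreads to all unprotected neighbours of burning vertices. -/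
structure FireStrategy {V : Type*} (G : SimpleGraph V) (f : ℕ → ℕ) (K P : ℕ → Set V) : Prop where
  burning_finite : ∀ n, (K n).Finite
  protected_finite : ∀ n, (P n).Finite
  protected_zero : P 0 = ∅
  protected_mono : ∀ n, P n ⊆ P (n + 1)
  protected_card : ∀ n, (P (n + 1) \ P n).ncard ≤ f (n + 1)
  protected_not_burning : ∀ n, Disjoint (P (n + 1)) (K n)
  spread : ∀ n, K (n + 1) = K n ∪ (G.outerBoundary (K n) \ P (n + 1))

/-- `G` has the `{f(n)}`-containment property if every finite initial fire admits a
strategy protecting at most `f n` vertices at step `n` under which the set of burning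
vertices is eventually constant. -/
def HasContainment {V : Type*} (G : SimpleGraph V) (f : ℕ → ℕ) : Prop :=
  ∀ K₀ : Set V, K₀.Finite →
    ∃ K P : ℕ → Set V, K 0 = K₀ ∧ FireStrategy G f K P ∧ ∃ N, ∀ n, N ≤ n → K n = K N

/-- The Cayley graph of a group w.r.t. a finite (symmetric) set `S`. -/
def cayleyGraph {Γ : Type*} [Group Γ] (S : Finset Γ) : SimpleGraph Γ :=
  SimpleGraph.fromRel (fun g h => g⁻¹ * h ∈ S)

/-- The growth function of a group w.r.t. a finite generating set: the number of
elements expressible as a product of at most `n` generators, i.e. `|B_n(id)|` in the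
word metric. -/
noncomputable def growth {Γ : Type*} [Group Γ] (S : Finset Γ) (n : ℕ) : ℕ :=
  Set.ncard {g : Γ | ∃ l : List Γ, l.length ≤ n ∧ (∀ x ∈ l, x ∈ (S : Set Γ)) ∧ l.prod = g}

/-!
Every boundary vertex of the burning set `Kₙ` is either protected by time `n + 1` or burning
at that time, so `|Kₙ₊₁| ≥ |Kₙ| + Φ(|Kₙ|) - (f 0 + ⋯ + f (n + 1))`, which is at least
`|Kₙ| + c |Kₙ|^((d-1)/d) - o(n^(d-1))`.
If `|Kₙ| ≥ β n^d`, the isoperimetric gain is at least `c β^((d-1)/d) n^(d-1)`; for `β` small this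
beats both the budget and the increment `β ((n+1)^d - n^d) ≤ 2^d β n^(d-1)` required to keep
`|Kₙ₊₁| ≥ β (n+1)^d`. Starting from a large enough fire, the burning set therefore grows like `n^d`
and never stabilises.
-/

namespace Real

theorem add_one_rpow_le {d x : ℝ} (hd : 1 ≤ d) (hx : 1 ≤ x) :
    (x + 1) ^ d ≤ x ^ d + 2 ^ d * x ^ (d - 1) := by
  have hx0 : 0 < x := one_pos.trans_le hx
  -- Convexity of `t ↦ t ^ d` on the chord from `x` to `2 * x`, evaluated at `x + 1`.
  have hconv :
      ((1 - 1 / x) * x + 1 / x * (2 * x)) ^ d ≤ (1 - 1 / x) * x ^ d + 1 / x * (2 * x) ^ d :=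
    (convexOn_rpow hd).2 (Set.mem_Ici.2 hx0.le) (Set.mem_Ici.2 (by positivity))
      (sub_nonneg.2 ((div_le_one hx0).2 hx)) (by positivity) (by ring)
  have hcomb : (1 - 1 / x) * x + 1 / x * (2 * x) = x + 1 := by field_simp; ring
  rw [hcomb, mul_rpow zero_le_two hx0.le] at hconv
  have hxd : x ^ d / x = x ^ (d - 1) := (rpow_sub_one hx0.ne' d).symm
  calc (x + 1) ^ d ≤ (1 - 1 / x) * x ^ d + 1 / x * (2 ^ d * x ^ d) := hconv
    _ = x ^ d - x ^ d / x + 2 ^ d * (x ^ d / x) := by ring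
    _ ≤ x ^ d + 2 ^ d * x ^ (d - 1) := by
      rw [hxd]; linarith [rpow_nonneg hx0.le (d - 1)]

theorem exists_pos_mul_le_mul_rpow {a c p : ℝ} (ha : 0 < a) (hc : 0 < c) (hp : p < 1) :
    ∃ β > 0, a * β ≤ c * β ^ p := by
  have hq : 1 - p ≠ 0 := by linarith
  set b := c / a
  have hb : 0 < b := div_pos hc ha
  refine ⟨b ^ (1 - p)⁻¹, by positivity, le_of_eq ?_⟩
  have hsplit : b ^ (1 - p)⁻¹ = b ^ ((1 - p)⁻¹ * p) * b := by
    rw [← rpow_add_one hb.ne']; congr 1; field_simp; ring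
  rw [← rpow_mul hb.le, hsplit]
  simp only [b]; field_simp

end Real

theorem Asymptotics.isLittleO_sum_range_add_rpow {u : ℕ → ℝ} {r : ℝ} (hr : 0 ≤ r)
    (hu : u =o[atTop] fun n => (n : ℝ) ^ r) (k : ℕ) :
    (fun n => ∑ i ∈ Finset.range (n + k), u i) =o[atTop] fun n => (n : ℝ) ^ (r + 1) := by
  have hu' : u =o[atTop] fun i => ((i : ℝ) + 1) ^ r := by
    refine hu.trans_isBigO (IsBigO.of_bound 1 (Eventually.of_forall fun i => ?_))
    rw [one_mul, Real.norm_of_nonneg (by positivity), Real.norm_of_nonneg (by positivity)]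
    exact Real.rpow_le_rpow (by positivity) (by linarith) hr
  have hge : ∀ n : ℕ, (n : ℝ) ≤ ∑ i ∈ Finset.range n, ((i : ℝ) + 1) ^ r := fun n => by
    simpa using Finset.card_nsmul_le_sum (Finset.range n) (fun i => ((i : ℝ) + 1) ^ r) 1
      fun i _ => Real.one_le_rpow (by linarith [i.cast_nonneg (α := ℝ)]) hr
  have hle : ∀ n : ℕ, ∑ i ∈ Finset.range n, ((i : ℝ) + 1) ^ r ≤ (n : ℝ) ^ (r + 1) := fun n => by
    calc ∑ i ∈ Finset.range n, ((i : ℝ) + 1) ^ r ≤ ∑ _i ∈ Finset.range n, (n : ℝ) ^ r :=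
          Finset.sum_le_sum fun i hi => Real.rpow_le_rpow (by positivity)
            (by exact_mod_cast Finset.mem_range.1 hi) hr
      _ = (n : ℝ) ^ (r + 1) := by
          rw [Finset.sum_const, Finset.card_range, nsmul_eq_mul,
            Real.rpow_add_one' (by positivity) (by linarith), mul_comm]
  have hsum := hu'.sum_range (fun i => by positivity)
    (tendsto_atTop_mono hge tendsto_natCast_atTop_atTop)
  have hsum_big : (fun n => ∑ i ∈ Finset.range n, ((i : ℝ) + 1) ^ r) =O[atTop]
      fun n => (n : ℝ) ^ (r + 1) := by
    refine IsBigO.of_bound 1 (Eventually.of_forall fun n => ?_)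
    rw [one_mul, Real.norm_of_nonneg (by positivity), Real.norm_of_nonneg (by positivity)]
    exact hle n
  have hshift : (fun n : ℕ => ((n + k : ℕ) : ℝ)) =O[atTop] fun n => (n : ℝ) := by
    refine IsBigO.of_bound (k + 1) ((eventually_ge_atTop 1).mono fun n hn => ?_)
    have hn' : (1 : ℝ) ≤ n := by exact_mod_cast hn
    rw [Real.norm_of_nonneg (by positivity), Real.norm_of_nonneg (by positivity)]
    push_cast
    nlinarith
  exact ((hsum.trans_isBigO hsum_big).comp_tendsto (tendsto_add_atTop_nat k)).trans_isBigO
    (hshift.rpow (by linarith) (Eventually.of_forall fun n => by positivity))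

section Recursion

variable {c d : ℝ}

theorem mul_add_one_rpow_le_of_step {β x y z t : ℝ} (hc : 0 ≤ c) (hd : 1 ≤ d) (hx : 1 ≤ x)
    (hβ : 0 < β) (hβc : 2 ^ (d + 1) * β ≤ c * β ^ ((d - 1) / d)) (hy : β * x ^ d ≤ y)
    (hstep : y + c * y ^ ((d - 1) / d) ≤ z + t) (ht : t ≤ c * β ^ ((d - 1) / d) / 2 * x ^ (d - 1)) :
    β * (x + 1) ^ d ≤ z := by
  set p := (d - 1) / d
  have hx0 : 0 ≤ x := by linarith
  have hp : 0 ≤ p := div_nonneg (by linarith) (by linarith)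
  have hgain : c * β ^ p * x ^ (d - 1) ≤ c * y ^ p := by
    have hpow : (β * x ^ d) ^ p = β ^ p * x ^ (d - 1) := by
      rw [Real.mul_rpow hβ.le (by positivity), ← Real.rpow_mul hx0,
        mul_div_cancel₀ _ (by linarith : d ≠ 0)]
    rw [mul_assoc, ← hpow]
    exact mul_le_mul_of_nonneg_left (Real.rpow_le_rpow (by positivity) hy hp) hc
  have hcost : β * 2 ^ d * x ^ (d - 1) ≤ c * β ^ p / 2 * x ^ (d - 1) := by
    refine mul_le_mul_of_nonneg_right ?_ (by positivity)
    rw [Real.rpow_add_one two_ne_zero] at hβc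
    linarith
  calc β * (x + 1) ^ d ≤ β * (x ^ d + 2 ^ d * x ^ (d - 1)) :=
        mul_le_mul_of_nonneg_left (Real.add_one_rpow_le hd hx) hβ.le
    _ ≤ z := by nlinarith

theorem exists_forall_mul_rpow_le_of_recursion (hc : 0 < c) (hd : 1 ≤ d) {s : ℕ → ℝ}
    (hs : s =o[atTop] fun n => (n : ℝ) ^ (d - 1)) :
    ∃ β > 0, ∃ k₀ : ℕ, ∀ x : ℕ → ℝ, Monotone x → (k₀ : ℝ) ≤ x 0 →
      (∀ n, x n + c * x n ^ ((d - 1) / d) ≤ x (n + 1) + s n) → ∀ n : ℕ, β * (n : ℝ) ^ d ≤ x n := by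
  obtain ⟨β, hβ, hβc⟩ := Real.exists_pos_mul_le_mul_rpow (a := 2 ^ (d + 1)) (by positivity) hc
    (div_lt_one (by linarith) |>.2 (by linarith) : (d - 1) / d < 1)
  obtain ⟨n₀, hn₀⟩ := eventually_atTop.1 (hs.bound (c := c * β ^ ((d - 1) / d) / 2) (by positivity))
  refine ⟨β, hβ, ⌈β * (max n₀ 1 : ℕ) ^ d⌉₊, fun x hmono hx0 hrec n => ?_⟩
  induction n with
  | zero =>
    rw [Nat.cast_zero, Real.zero_rpow (by linarith), mul_zero]
    exact (Nat.cast_nonneg _).trans hx0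
  | succ n ih =>
    rcases le_or_gt (max n₀ 1) n with hn | hn
    · have ht : s n ≤ c * β ^ ((d - 1) / d) / 2 * (n : ℝ) ^ (d - 1) := by
        have hb := hn₀ n (le_of_max_le_left hn)
        rw [Real.norm_of_nonneg (Real.rpow_nonneg n.cast_nonneg _)] at hb
        exact (Real.le_norm_self _).trans hb
      push_cast
      exact mul_add_one_rpow_le_of_step hc.le hd (by exact_mod_cast le_of_max_le_right hn) hβ hβc ih
        (hrec n) ht
    · calc β * ((n + 1 : ℕ) : ℝ) ^ d ≤ β * (max n₀ 1 : ℕ) ^ d := by gcongr; exact_mod_cast hn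
        _ ≤ ⌈β * (max n₀ 1 : ℕ) ^ d⌉₊ := Nat.le_ceil _
        _ ≤ x (n + 1) := hx0.trans (hmono (Nat.zero_le _))

theorem exists_tendsto_atTop_of_recursion (hc : 0 < c) (hd : 1 ≤ d) {s : ℕ → ℝ}
    (hs : s =o[atTop] fun n => (n : ℝ) ^ (d - 1)) :
    ∃ k₀ : ℕ, ∀ x : ℕ → ℝ, Monotone x → (k₀ : ℝ) ≤ x 0 →
      (∀ n, x n + c * x n ^ ((d - 1) / d) ≤ x (n + 1) + s n) → Tendsto x atTop atTop := by
  obtain ⟨β, hβ, k₀, hk₀⟩ := exists_forall_mul_rpow_le_of_recursion hc hd hs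
  refine ⟨k₀, fun x hmono hx0 hrec => tendsto_atTop_mono (hk₀ x hmono hx0 hrec) ?_⟩
  exact ((tendsto_rpow_atTop (by linarith)).comp tendsto_natCast_atTop_atTop).const_mul_atTop hβ

end Recursion

namespace SimpleGraph

variable {V : Type*} (G : SimpleGraph V)

theorem isoProfile_le_ncard_outerBoundary {K : Set V} (hK : K.Finite) :
    G.isoProfile K.ncard ≤ (G.outerBoundary K).ncard :=
  Nat.sInf_le ⟨K, hK, rfl, rfl⟩

theorem exists_finite_ncard_eq_of_isoProfile_pos {k : ℕ} (h : 0 < G.isoProfile k) :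
    ∃ K : Set V, K.Finite ∧ K.ncard = k := by
  obtain ⟨_, K, hK, hcard, -⟩ := Nat.nonempty_of_pos_sInf h
  exact ⟨K, hK, hcard⟩

end SimpleGraph

namespace FireStrategy

variable {V : Type*} {G : SimpleGraph V} {f : ℕ → ℕ} {K P : ℕ → Set V}

theorem monotone_burning (h : FireStrategy G f K P) : Monotone K :=
  monotone_nat_of_le_succ fun n => h.spread n ▸ Set.subset_union_left

theorem ncard_protected_le_sum (h : FireStrategy G f K P) (n : ℕ) :
    (P n).ncard ≤ ∑ i ∈ Finset.range (n + 1), f i := by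
  induction n with
  | zero => simp [h.protected_zero]
  | succ n ih =>
    rw [Finset.sum_range_succ, ← Set.ncard_sdiff_add_ncard_of_subset (h.protected_mono n)
      (h.protected_finite _)]
    linarith [h.protected_card n]

theorem burning_union_outerBoundary_subset (h : FireStrategy G f K P) (n : ℕ) :
    K n ∪ G.outerBoundary (K n) ⊆ K (n + 1) ∪ P (n + 1) := by
  rw [h.spread n]
  rintro v (hv | hv)
  · exact Or.inl (Or.inl hv)
  · by_cases hP : v ∈ P (n + 1)
    · exact Or.inr hP
    · exact Or.inl (Or.inr ⟨hv, hP⟩)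

theorem ncard_add_ncard_outerBoundary_le (h : FireStrategy G f K P) (n : ℕ) :
    (K n).ncard + (G.outerBoundary (K n)).ncard ≤
      (K (n + 1)).ncard + ∑ i ∈ Finset.range (n + 2), f i := by
  have hfin : (K (n + 1) ∪ P (n + 1)).Finite :=
    (h.burning_finite _).union (h.protected_finite _)
  have hsub := h.burning_union_outerBoundary_subset n
  have hdisj : Disjoint (K n) (G.outerBoundary (K n)) :=
    Set.disjoint_left.2 fun _ hv hv' => hv'.1 hv
  calc (K n).ncard + (G.outerBoundary (K n)).ncard = (K n ∪ G.outerBoundary (K n)).ncard :=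
        (Set.ncard_union_eq hdisj (hfin.subset (Set.subset_union_left.trans hsub))
          (hfin.subset (Set.subset_union_right.trans hsub))).symm
    _ ≤ (K (n + 1) ∪ P (n + 1)).ncard := Set.ncard_le_ncard hsub hfin
    _ ≤ (K (n + 1)).ncard + (P (n + 1)).ncard := Set.ncard_union_le _ _
    _ ≤ _ := Nat.add_le_add_left (h.ncard_protected_le_sum (n + 1)) _

theorem ncard_add_le_of_le_isoProfile (h : FireStrategy G f K P) {φ : ℕ → ℝ}
    (hφ : ∀ k, 1 ≤ k → φ k ≤ G.isoProfile k) (hK₀ : 1 ≤ (K 0).ncard) (n : ℕ) :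
    (K n).ncard + φ (K n).ncard ≤ (K (n + 1)).ncard + ∑ i ∈ Finset.range (n + 2), (f i : ℝ) := by
  have hKn : 1 ≤ (K n).ncard :=
    hK₀.trans (Set.ncard_le_ncard (h.monotone_burning n.zero_le) (h.burning_finite n))
  have hiso : φ (K n).ncard ≤ (G.outerBoundary (K n)).ncard :=
    (hφ _ hKn).trans (by exact_mod_cast G.isoProfile_le_ncard_outerBoundary (h.burning_finite n))
  have hstep : ((K n).ncard : ℝ) + (G.outerBoundary (K n)).ncard ≤
      (K (n + 1)).ncard + ∑ i ∈ Finset.range (n + 2), (f i : ℝ) := by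
    exact_mod_cast h.ncard_add_ncard_outerBoundary_le n
  linarith

end FireStrategy

theorem firefighter_isoperimetric_polynomial_general {V : Type*} (G : SimpleGraph V)
    (c : ℝ) (hc : 0 < c) (d : ℝ) (hd : 2 ≤ d)
    (hiso : ∀ k : ℕ, 1 ≤ k → c * (k : ℝ) ^ ((d - 1) / d) ≤ (G.isoProfile k : ℝ))
    (f : ℕ → ℕ)
    (hf : (fun n => (f n : ℝ)) =o[atTop] fun n => (n : ℝ) ^ (d - 2)) :
    ¬ HasContainment G f := by
  intro hcont
  have hbudget : (fun n => ∑ i ∈ Finset.range (n + 2), (f i : ℝ)) =o[atTop]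
      fun n => (n : ℝ) ^ (d - 1) := by
    convert Asymptotics.isLittleO_sum_range_add_rpow (by linarith) hf 2 using 3
    ring
  obtain ⟨k₀, hk₀⟩ := exists_tendsto_atTop_of_recursion hc (by linarith) hbudget
  have hk : 1 ≤ max k₀ 1 := le_max_right _ _
  obtain ⟨K₀, hK₀, hcard⟩ := G.exists_finite_ncard_eq_of_isoProfile_pos (k := max k₀ 1) <| by
    have hpos := (mul_pos hc (rpow_pos_of_pos (by exact_mod_cast hk) ((d - 1) / d))).trans_le
      (hiso _ hk)
    exact_mod_cast hpos
  obtain ⟨K, P, rfl, hst, N, hN⟩ := hcont K₀ hK₀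
  have hmono : Monotone fun n => ((K n).ncard : ℝ) := fun m n hmn =>
    Nat.cast_le.2 <| Set.ncard_le_ncard (hst.monotone_burning hmn) (hst.burning_finite n)
  have hgrowth := hk₀ _ hmono (by rw [hcard]; exact_mod_cast le_max_left _ _)
    (hst.ncard_add_le_of_le_isoProfile hiso (hcard ▸ hk))
  refine not_tendsto_const_atTop ((K N).ncard : ℝ) atTop (hgrowth.congr' ?_)
  exact eventually_atTop.2 ⟨N, fun n hn => by dsimp only; rw [hN n hn]⟩

/-- Let `G` be a connected locally finite graph whose isoperimetric profile satisfies
`Φ(k) ≥ c * k^((d-1)/d)` for all `k ≥ 1`, for some `c > 0` and some real `d ≥ 2`.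
Then `G` does not satisfy `{f(n)}`-containment for any `f = o(n^{d-2})`. -/
theorem firefighter_isoperimetric_polynomial {V : Type*} (G : SimpleGraph V)
    (hconn : G.Connected) (hlf : G.LocallyFinite)
    (c : ℝ) (hc : 0 < c) (d : ℝ) (hd : 2 ≤ d)
    (hiso : ∀ k : ℕ, 1 ≤ k → c * (k : ℝ) ^ ((d - 1) / d) ≤ (G.isoProfile k : ℝ))
    (f : ℕ → ℕ)
    (hf : (fun n => (f n : ℝ)) =o[atTop] fun n => (n : ℝ) ^ (d - 2)) :
    ¬ HasContainment G f :=
  firefighter_isoperimetric_polynomial_general G c hc d hd hiso f hf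
end

section
/- Let c > 0 and d ≥ 2 be real numbers, and let g : ℕ → [0,∞) satisfy g(n) = o(n^{d-1}). Then there exist constants F, R > 0 (depending only on c, d and g) such that every sequence (k_n) of nonnegative reals satisfying k_{n+1} ≥ k_n + c·k_n^{(d-1)/d} − g(n) for all n ≥ 0 and k_0 > (F/R)^d satisfies k_n ≥ ((n+F)/R)^d for all n ≥ 0; in particular k_n → ∞. -/
/-!
Compare `k` with `s n = ((n + F) / R) ^ d`. Since `x ↦ x + c x^{(d-1)/d} - g n` is monotone on
`[0, ∞)`, `k` dominates any sequence `s` with `s 0 ≤ k 0` that is a subsolution of the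
recursion. By convexity of `x ↦ x ^ d`, the increment `s (n+1) - s n` is at most
`d 2^{d-1} / R · (s n)^{(d-1)/d}`, which is `(c/2) (s n)^{(d-1)/d}` once `R = d 2^d / c`;
and since `g n = o(n^{d-1})`, for `F` large we also have `g n ≤ (c/2) (s n)^{(d-1)/d}` for all `n`.
-/

open Filter Real

theorem rpow_sub_rpow_le_mul_sub {a b d : ℝ} (ha : 0 ≤ a) (hab : a ≤ b) (hd : 1 ≤ d) :
    b ^ d - a ^ d ≤ d * b ^ (d - 1) * (b - a) := by
  obtain rfl | hlt := hab.eq_or_lt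
  · simp
  have hslope := (convexOn_rpow hd).slope_le_of_hasDerivAt ha (ha.trans hab) hlt
    (hasDerivAt_rpow_const (Or.inr hd))
  rwa [slope_def_field, div_le_iff₀ (sub_pos.2 hlt)] at hslope

theorem Asymptotics.IsLittleO.eventually_forall_le_mul_add_rpow {g : ℕ → ℝ} {p ε : ℝ}
    (hg : g =o[atTop] fun n => (n : ℝ) ^ p) (hp : 0 < p) (hε : 0 < ε) :
    ∀ᶠ F in atTop, ∀ n, g n ≤ ε * (n + F) ^ p := by
  obtain ⟨N, hN⟩ := eventually_atTop.1 (hg.def hε)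
  have hsmall : ∀ᶠ F in atTop, ∀ n : Fin N, g n ≤ ε * (n + F) ^ p :=
    eventually_all.2 fun n => (((tendsto_rpow_atTop hp).comp
      (tendsto_atTop_add_const_left _ _ tendsto_id)).const_mul_atTop hε).eventually_ge_atTop _
  filter_upwards [hsmall, eventually_ge_atTop 0] with F hF hF0 n
  obtain hn | hn := lt_or_ge n N
  · exact hF ⟨n, hn⟩
  calc g n ≤ ε * ‖(n : ℝ) ^ p‖ := (le_abs_self _).trans (hN n hn)
    _ = ε * (n : ℝ) ^ p := by rw [norm_of_nonneg (by positivity)]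
    _ ≤ ε * (n + F) ^ p := by gcongr; linarith

theorem seq_le_seq_of_monotoneOn {α : Type*} [Preorder α] {S : Set α} {φ : ℕ → α → α}
    {s k : ℕ → α} (hφ : ∀ n, MonotoneOn (φ n) S) (hs : ∀ n, s n ∈ S) (hk : ∀ n, k n ∈ S)
    (h0 : s 0 ≤ k 0) (hsub : ∀ n, s (n + 1) ≤ φ n (s n)) (hsup : ∀ n, φ n (k n) ≤ k (n + 1)) :
    ∀ n, s n ≤ k n
  | 0 => h0
  | n + 1 => (hsub n).trans <|
      (hφ n (hs n) (hk n) (seq_le_seq_of_monotoneOn hφ hs hk h0 hsub hsup n)).trans (hsup n)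

theorem rpow_div_add_one_le {c d R t : ℝ} (hd : 1 ≤ d) (hR : 0 < R)
    (hRc : 2 * d * 2 ^ (d - 1) ≤ c * R) (ht : 1 ≤ t) :
    ((t + 1) / R) ^ d ≤ (t / R) ^ d + c / 2 * (t / R) ^ (d - 1) := by
  have ha : 0 ≤ t / R := by positivity
  have hab : t / R ≤ (t + 1) / R := by gcongr; linarith
  have hmvt := rpow_sub_rpow_le_mul_sub ha hab hd
  have hdouble : ((t + 1) / R) ^ (d - 1) ≤ 2 ^ (d - 1) * (t / R) ^ (d - 1) := by
    rw [← mul_rpow (by norm_num) ha]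
    gcongr
    rw [mul_div_assoc']
    gcongr
    linarith
  have hgap : (t + 1) / R - t / R = 1 / R := by ring
  rw [hgap] at hmvt
  calc ((t + 1) / R) ^ d
      ≤ (t / R) ^ d + d * ((t + 1) / R) ^ (d - 1) * (1 / R) := by linarith
    _ ≤ (t / R) ^ d + d * (2 ^ (d - 1) * (t / R) ^ (d - 1)) * (1 / R) := by gcongr
    _ = (t / R) ^ d + (2 * d * 2 ^ (d - 1)) / (2 * R) * (t / R) ^ (d - 1) := by ring
    _ ≤ (t / R) ^ d + c / 2 * (t / R) ^ (d - 1) := by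
        gcongr _ + ?_ * _
        rw [div_le_iff₀ (by positivity)]
        linarith

theorem natCast_succ_add_div_rpow_le {c d F R : ℝ} {g : ℕ → ℝ} (hd : 1 ≤ d) (hR : 0 < R)
    (hRc : 2 * d * 2 ^ (d - 1) ≤ c * R) (hF : 1 ≤ F)
    (hg : ∀ n : ℕ, g n ≤ c / 2 * ((n + F) / R) ^ (d - 1)) (n : ℕ) :
    (((n + 1 : ℕ) + F) / R) ^ d ≤
      ((n + F) / R) ^ d + c * (((n + F) / R) ^ d) ^ ((d - 1) / d) - g n := by
  have hpos : 0 < (n + F) / R := by positivity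
  have hcollapse : (((n + F) / R) ^ d) ^ ((d - 1) / d) = ((n + F) / R) ^ (d - 1) := by
    rw [← rpow_mul hpos.le, mul_div_cancel₀ _ (by linarith : d ≠ 0)]
  have hstep := rpow_div_add_one_le (t := n + F) hd hR hRc (by linarith [n.cast_nonneg (α := ℝ)])
  rw [hcollapse, Nat.cast_succ, add_right_comm]
  linarith [hg n]

theorem recursion_polynomial_general (c d : ℝ) (hc : 0 < c) (hd : 2 ≤ d)
    (g : ℕ → ℝ)
    (hg : (fun n => g n) =o[atTop] fun n => (n : ℝ) ^ (d - 1)) :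
    ∃ F R : ℝ, 0 < F ∧ 0 < R ∧
      ∀ k : ℕ → ℝ, (∀ n, 0 ≤ k n) →
        (∀ n : ℕ, k n + c * (k n) ^ ((d - 1) / d) - g n ≤ k (n + 1)) →
        (F / R) ^ d < k 0 →
        (∀ n : ℕ, (((n : ℝ) + F) / R) ^ d ≤ k n) ∧ Tendsto k atTop atTop := by
  set R := 2 * d * 2 ^ (d - 1) / c
  have hR : 0 < R := by positivity
  obtain ⟨F, hgF, hF⟩ := ((hg.eventually_forall_le_mul_add_rpow (by linarith)
    (by positivity : 0 < c / 2 / R ^ (d - 1))).and (eventually_ge_atTop 1)).exists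
  have hg_le : ∀ n : ℕ, g n ≤ c / 2 * ((n + F) / R) ^ (d - 1) := fun n => by
    rw [div_rpow (by positivity) hR.le]
    exact (hgF n).trans_eq (by ring)
  have hq : 0 ≤ (d - 1) / d := div_nonneg (by linarith) (by linarith)
  have hφ : ∀ n, MonotoneOn (fun x => x + c * x ^ ((d - 1) / d) - g n) (Set.Ici 0) :=
    fun n x (hx : 0 ≤ x) y _ hxy => by dsimp only; gcongr
  refine ⟨F, R, by linarith, hR, fun k hk hrec hk0 => ?_⟩
  have hlower : ∀ n : ℕ, ((n + F) / R) ^ d ≤ k n :=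
    seq_le_seq_of_monotoneOn hφ (fun n => Set.mem_Ici.2 (by positivity)) hk
      (by simpa using hk0.le)
      (natCast_succ_add_div_rpow_le (by linarith) hR (mul_div_cancel₀ _ hc.ne').ge hF hg_le) hrec
  refine ⟨hlower, tendsto_atTop_mono hlower ?_⟩
  exact (tendsto_rpow_atTop (by linarith)).comp <| (tendsto_atTop_add_const_right _ F
    tendsto_natCast_atTop_atTop).atTop_div_const hR

/-- **Recursion lemma, polynomial case.** Let `c > 0`, `d ≥ 2` be reals and let
`g : ℕ → [0,∞)` satisfy `g(n) = o(n^{d-1})`. Then there are `F, R > 0` (depending only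
on `c`, `d` and `g`) such that any sequence of nonnegative reals with
`k_{n+1} ≥ k_n + c k_n^{(d-1)/d} − g(n)` and `k_0 > (F/R)^d` satisfies
`k_n ≥ ((n+F)/R)^d` for all `n`; in particular `k_n → ∞`. -/
theorem recursion_polynomial (c d : ℝ) (hc : 0 < c) (hd : 2 ≤ d)
    (g : ℕ → ℝ) (hg0 : ∀ n, 0 ≤ g n)
    (hg : (fun n => g n) =o[atTop] fun n => (n : ℝ) ^ (d - 1)) :
    ∃ F R : ℝ, 0 < F ∧ 0 < R ∧
      ∀ k : ℕ → ℝ, (∀ n, 0 ≤ k n) →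
        (∀ n : ℕ, k n + c * (k n) ^ ((d - 1) / d) - g n ≤ k (n + 1)) →
        (F / R) ^ d < k 0 →
        (∀ n : ℕ, (((n : ℝ) + F) / R) ^ d ≤ k n) ∧ Tendsto k atTop atTop :=
  recursion_polynomial_general c d hc hd g hg
end
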